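/- Let q ∈ (−1,0) and let u ∈ ℂ with |u| = 1. There exist (unique) bounded linear operators α and γ on ℓ²(ℕ) satisfying α e_k = √(1−q^{2k}) e_{k−1} and γ e_k = u q^k e_k for all k ∈ ℕ. Their adjoints satisfy α* e_k = √(1−q^{2k+2}) e_{k+1} and γ* e_k = u⁻¹ q^k e_k, and the relations αγ = qγα, αγ* = qγ*α, γγ* = γ*γ, α*α + γ*γ = 1, and αα* + q²γγ* = 1 hold. -/

import Mathlib

/-!
`α` is a weighted backward shift `e_k ↦ a_k e_{k-1}` with `a_0 = 0`, and `γ` a diagonal operator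
`e_k ↦ d_k e_k`; both weight sequences lie in the unit disc, so both operators are realised on `ℓ²`
as weighted composition operators `f ↦ w · (f ∘ g)` (with `g = succ` and `g = id`). Everything
else is checked on the Hilbert basis: the adjoints are the forward shift and the diagonal operator
with conjugated weights, and each relation reduces to a scalar identity, namely
`d_{k+1} = q d_k` and `|a_k|² + |d_k|² = 1 = |a_{k+1}|² + q² |d_k|²`, i.e.
`(1 - q^{2k}) + q^{2k} = 1`.
-/

open ContinuousLinearMap

/-- `ℓ²(ℕ)`: square-summable complex sequences. -/
noncomputable def ell2 : Type := lp (fun _ : ℕ => ℂ) 2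

noncomputable instance : NormedAddCommGroup ell2 := by unfold ell2; infer_instance
noncomputable instance : InnerProductSpace ℂ ell2 := by unfold ell2; infer_instance
instance : CompleteSpace ell2 := by unfold ell2; infer_instance

/-- The standard orthonormal basis vector `e_k` of `ℓ²(ℕ)`. -/
noncomputable def eb (k : ℕ) : ell2 := (lp.single 2 k (1 : ℂ) : lp (fun _ : ℕ => ℂ) 2)

open scoped ENNReal InnerProductSpace ComplexConjugate

namespace lp

variable {𝕜 α β : Type*} [NormedField 𝕜] {p : ℝ≥0∞} [Fact (1 ≤ p)]

theorem memℓp_mul_comp (hp : p ≠ ∞) {w : α → 𝕜} {C : ℝ} (hw : ∀ a, ‖w a‖ ≤ C) {g : α → β}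
    (hg : g.Injective) (f : lp (fun _ : β => 𝕜) p) : Memℓp (fun a => w a * f (g a)) p := by
  have hp' : 0 < p.toReal := ENNReal.toReal_pos (zero_lt_one.trans_le Fact.out).ne' hp
  have hfg : Memℓp (fun a => ‖f (g a)‖) p := by
    refine memℓp_gen ?_
    simp only [norm_norm]
    exact ((lp.memℓp f).summable hp').comp_injective hg
  refine (hfg.const_mul C).mono fun a => ?_
  rw [norm_mul]
  exact mul_le_mul_of_nonneg_right (hw a) (norm_nonneg _)

theorem norm_mul_comp_le (hp : p ≠ ∞) {w : α → 𝕜} {C : ℝ} (hC : 0 ≤ C) (hw : ∀ a, ‖w a‖ ≤ C)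
    {g : α → β} (hg : g.Injective) (f : lp (fun _ : β => 𝕜) p) :
    ‖(⟨_, memℓp_mul_comp hp hw hg f⟩ : lp (fun _ : α => 𝕜) p)‖ ≤ C * ‖f‖ := by
  classical
  have hp' : 0 < p.toReal := ENNReal.toReal_pos (zero_lt_one.trans_le Fact.out).ne' hp
  refine norm_le_of_forall_sum_le hp' (by positivity) fun s => ?_
  calc ∑ a ∈ s, ‖w a * f (g a)‖ ^ p.toReal
      ≤ ∑ a ∈ s, C ^ p.toReal * ‖f (g a)‖ ^ p.toReal := by
        gcongr with a
        rw [norm_mul, ← Real.mul_rpow hC (norm_nonneg _)]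
        gcongr
        exact hw a
    _ = C ^ p.toReal * ∑ b ∈ s.image g, ‖f b‖ ^ p.toReal := by
        rw [Finset.mul_sum, Finset.sum_image hg.injOn]
    _ ≤ C ^ p.toReal * ‖f‖ ^ p.toReal := by gcongr; exact sum_rpow_le_norm_rpow hp' f _
    _ = (C * ‖f‖) ^ p.toReal := (Real.mul_rpow hC (norm_nonneg _)).symm

variable (p) in
noncomputable def weightedComp (hp : p ≠ ∞) (w : α → 𝕜) {C : ℝ} (hC : 0 ≤ C)
    (hw : ∀ a, ‖w a‖ ≤ C) (g : α → β) (hg : g.Injective) :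
    lp (fun _ : β => 𝕜) p →L[𝕜] lp (fun _ : α => 𝕜) p :=
  LinearMap.mkContinuous
    { toFun f := ⟨_, memℓp_mul_comp hp hw hg f⟩
      map_add' f f' := lp.ext <| funext fun a => mul_add (w a) (f (g a)) (f' (g a))
      map_smul' c f := lp.ext <| funext fun a => by simp [mul_left_comm] }
    C (norm_mul_comp_le hp hC hw hg)

theorem weightedComp_apply (hp : p ≠ ∞) (w : α → 𝕜) {C : ℝ} (hC : 0 ≤ C)
    (hw : ∀ a, ‖w a‖ ≤ C) (g : α → β) (hg : g.Injective) (f : lp (fun _ : β => 𝕜) p) (a : α) :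
    weightedComp p hp w hC hw g hg f a = w a * f (g a) := rfl

variable [DecidableEq β]

theorem weightedComp_single_of_notMem_range (hp : p ≠ ∞) (w : α → 𝕜) {C : ℝ} (hC : 0 ≤ C)
    (hw : ∀ a, ‖w a‖ ≤ C) (g : α → β) (hg : g.Injective) {b : β} (hb : b ∉ Set.range g)
    (c : 𝕜) : weightedComp p hp w hC hw g hg (lp.single p b c) = 0 := by
  ext a
  rw [weightedComp_apply, lp.single_apply, Pi.single_eq_of_ne (fun h => hb ⟨a, h⟩)]
  simp

variable [DecidableEq α]

theorem weightedComp_single (hp : p ≠ ∞) (w : α → 𝕜) {C : ℝ} (hC : 0 ≤ C)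
    (hw : ∀ a, ‖w a‖ ≤ C) (g : α → β) (hg : g.Injective) (a : α) (c : 𝕜) :
    weightedComp p hp w hC hw g hg (lp.single p (g a) c) = lp.single p a (w a * c) := by
  ext a'
  rw [weightedComp_apply, lp.single_apply, lp.single_apply]
  rcases eq_or_ne a' a with rfl | h
  · simp
  · simp [h, hg.ne h]

theorem exists_diagonal (hp : p ≠ ∞) {d : α → 𝕜} {C : ℝ} (hC : 0 ≤ C) (hd : ∀ a, ‖d a‖ ≤ C) :
    ∃ D : lp (fun _ : α => 𝕜) p →L[𝕜] lp (fun _ : α => 𝕜) p,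
      ∀ a, D (lp.single p a 1) = d a • lp.single p a 1 :=
  ⟨weightedComp p hp d hC hd id Function.injective_id, fun a => by
    rw [← lp.single_smul, smul_eq_mul, mul_one]
    exact weightedComp_single hp d hC hd id Function.injective_id a 1 |>.trans <| by rw [mul_one]⟩

theorem exists_backwardShift (hp : p ≠ ∞) {a : ℕ → 𝕜} {C : ℝ} (hC : 0 ≤ C) (ha : ∀ k, ‖a k‖ ≤ C) (ha₀ : a 0 = 0) :
    ∃ A : lp (fun _ : ℕ => 𝕜) p →L[𝕜] lp (fun _ : ℕ => 𝕜) p,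
      ∀ k, A (lp.single p k 1) = a k • lp.single p (k - 1) 1 := by
  refine ⟨weightedComp p hp (fun k => a (k + 1)) hC (fun k => ha _) Nat.succ
    Nat.succ_injective, ?_⟩
  rintro (_ | k)
  · rw [ha₀, zero_smul]
    exact weightedComp_single_of_notMem_range hp _ hC _ _ _ (by simp) 1
  · rw [Nat.add_sub_cancel, ← lp.single_smul, smul_eq_mul, mul_one]
    exact (weightedComp_single hp _ hC _ _ _ k 1).trans <| by rw [mul_one]

end lp

namespace HilbertBasis

variable {ι 𝕜 E : Type*} [RCLike 𝕜] [NormedAddCommGroup E] [InnerProductSpace 𝕜 E]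

section

variable (b : HilbertBasis ι 𝕜 E)

theorem ext_continuousLinearMap {F : Type*} [TopologicalSpace F] [AddCommMonoid F] [Module 𝕜 F]
    [T2Space F] {A B : E →L[𝕜] F} (h : ∀ i, A (b i) = B (b i)) : A = B :=
  ext_on (Submodule.dense_iff_topologicalClosure_eq_top.mpr b.dense_span) <| by
    rintro _ ⟨i, rfl⟩
    exact h i

theorem existsUnique_of_exists_apply_eq {F : Type*} [TopologicalSpace F] [AddCommMonoid F]
    [Module 𝕜 F] [T2Space F] {v : ι → F} (h : ∃ A : E →L[𝕜] F, ∀ i, A (b i) = v i) :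
    ∃! A : E →L[𝕜] F, ∀ i, A (b i) = v i :=
  let ⟨A, hA⟩ := h
  ⟨A, hA, fun _ hB => b.ext_continuousLinearMap fun i => (hB i).trans (hA i).symm⟩

theorem ext_inner_left {x y : E} (h : ∀ i, ⟪b i, x⟫_𝕜 = ⟪b i, y⟫_𝕜) : x = y :=
  b.repr.injective <| lp.ext <| funext fun i => by simp only [b.repr_apply_apply, h i]

theorem inner_eq_ite [DecidableEq ι] (i j : ι) : ⟪b i, b j⟫_𝕜 = if i = j then 1 else 0 :=
  orthonormal_iff_ite.mp b.orthonormal i j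

theorem commute_of_diagonal {D D' : E →L[𝕜] E} {d d' : ι → 𝕜} (hD : ∀ i, D (b i) = d i • b i)
    (hD' : ∀ i, D' (b i) = d' i • b i) : Commute D D' :=
  b.ext_continuousLinearMap fun i => by
    simp only [mul_apply_eq_comp, hD, hD', map_smul, smul_smul, mul_comm]

theorem adjoint_apply_of_diagonal [CompleteSpace E] {A : E →L[𝕜] E} {d : ι → 𝕜}
    (hA : ∀ i, A (b i) = d i • b i) (i : ι) : adjoint A (b i) = conj (d i) • b i := by
  classical
  refine b.ext_inner_left fun j => ?_
  rw [adjoint_inner_right, hA, inner_smul_left, inner_smul_right, b.inner_eq_ite]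
  split_ifs with h
  · rw [h]
  · simp

end

variable (b : HilbertBasis ℕ 𝕜 E) {A : E →L[𝕜] E} {a : ℕ → 𝕜}

theorem backwardShift_mul_diagonal_eq_smul (hA : ∀ k, A (b k) = a k • b (k - 1)) (ha : a 0 = 0)
    {D : E →L[𝕜] E} {d : ℕ → 𝕜} (hD : ∀ k, D (b k) = d k • b k) {s : 𝕜}
    (hd : ∀ k, d (k + 1) = s * d k) : A * D = s • (D * A) := by
  refine b.ext_continuousLinearMap fun k => ?_
  rcases k with _ | k
  · simp [hA, hD, ha]
  · simp only [mul_apply_eq_comp, smul_apply, hA, hD, map_smul, smul_smul, Nat.add_sub_cancel, hd]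
    rw [mul_assoc, mul_comm (d k)]

variable [CompleteSpace E]

theorem adjoint_apply_of_backwardShift (hA : ∀ k, A (b k) = a k • b (k - 1)) (ha : a 0 = 0)
    (k : ℕ) : adjoint A (b k) = conj (a (k + 1)) • b (k + 1) := by
  refine b.ext_inner_left fun j => ?_
  rw [adjoint_inner_right, hA, inner_smul_left, inner_smul_right, b.inner_eq_ite, b.inner_eq_ite]
  rcases j with _ | j
  · simp [ha]
  · by_cases h : j = k <;> simp [h]

theorem adjoint_mul_self_apply_of_backwardShift (hA : ∀ k, A (b k) = a k • b (k - 1))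
    (ha : a 0 = 0) (k : ℕ) : (adjoint A * A) (b k) = ((‖a k‖ : 𝕜) ^ 2) • b k := by
  rcases k with _ | k
  · simp [hA, ha]
  · rw [mul_apply_eq_comp, hA, map_smul, Nat.add_sub_cancel,
      b.adjoint_apply_of_backwardShift hA ha, smul_smul, RCLike.mul_conj]

theorem mul_adjoint_apply_of_backwardShift (hA : ∀ k, A (b k) = a k • b (k - 1))
    (ha : a 0 = 0) (k : ℕ) : (A * adjoint A) (b k) = ((‖a (k + 1)‖ : 𝕜) ^ 2) • b k := by
  rw [mul_apply_eq_comp, b.adjoint_apply_of_backwardShift hA ha, map_smul, hA, Nat.add_sub_cancel,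
    smul_smul, RCLike.conj_mul]

theorem adjoint_mul_self_add_adjoint_mul_self_eq_one (hA : ∀ k, A (b k) = a k • b (k - 1))
    (ha : a 0 = 0) {D : E →L[𝕜] E} {d : ℕ → 𝕜} (hD : ∀ k, D (b k) = d k • b k)
    (h : ∀ k, ‖a k‖ ^ 2 + ‖d k‖ ^ 2 = 1) : adjoint A * A + adjoint D * D = 1 := by
  refine b.ext_continuousLinearMap fun k => ?_
  have hk : (‖a k‖ : 𝕜) ^ 2 + d k * conj (d k) = 1 := by rw [RCLike.mul_conj]; exact_mod_cast h k
  rw [add_apply, b.adjoint_mul_self_apply_of_backwardShift hA ha, mul_apply_eq_comp, hD, map_smul,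
    b.adjoint_apply_of_diagonal hD, smul_smul, ← add_smul, hk, one_smul, one_apply_eq_self]

theorem mul_adjoint_add_smul_mul_adjoint_eq_one (hA : ∀ k, A (b k) = a k • b (k - 1))
    (ha : a 0 = 0) {D : E →L[𝕜] E} {d : ℕ → 𝕜} (hD : ∀ k, D (b k) = d k • b k) {s : 𝕜}
    (h : ∀ k, ((‖a (k + 1)‖ ^ 2 : ℝ) : 𝕜) + s * ((‖d k‖ ^ 2 : ℝ) : 𝕜) = 1) :
    A * adjoint A + s • (D * adjoint D) = 1 := by
  refine b.ext_continuousLinearMap fun k => ?_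
  have hk := h k
  push_cast at hk
  rw [add_apply, b.mul_adjoint_apply_of_backwardShift hA ha, smul_apply, mul_apply_eq_comp,
    b.adjoint_apply_of_diagonal hD, map_smul, hD, smul_smul, smul_smul, mul_assoc,
    RCLike.conj_mul, ← add_smul, hk, one_smul, one_apply_eq_self]

end HilbertBasis

theorem ell2.exists_hilbertBasis_coe_eq : ∃ b : HilbertBasis ℕ ℂ ell2, ⇑b = eb :=
  ⟨(default : HilbertBasis ℕ ℂ (lp (fun _ : ℕ => ℂ) 2)),
    funext fun k => (HilbertBasis.repr_symm_single _ k).symm⟩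

theorem pow_two_mul_le_one {q : ℝ} (hq : |q| ≤ 1) (k : ℕ) : q ^ (2 * k) ≤ 1 := by
  rw [← (even_two_mul k).pow_abs]
  exact pow_le_one₀ (abs_nonneg q) hq

theorem norm_ofReal_sqrt_one_sub_pow_sq {q : ℝ} (hq : |q| ≤ 1) (k : ℕ) :
    ‖((√(1 - q ^ (2 * k)) : ℝ) : ℂ)‖ ^ 2 = 1 - q ^ (2 * k) := by
  rw [Complex.norm_real, Real.norm_of_nonneg (Real.sqrt_nonneg _),
    Real.sq_sqrt (sub_nonneg.mpr (pow_two_mul_le_one hq k))]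

theorem norm_ofReal_sqrt_one_sub_pow_le_one {q : ℝ} (hq : |q| ≤ 1) (k : ℕ) :
    ‖((√(1 - q ^ (2 * k)) : ℝ) : ℂ)‖ ≤ 1 := by
  refine (sq_le_one_iff₀ (norm_nonneg _)).mp ?_
  rw [norm_ofReal_sqrt_one_sub_pow_sq hq]
  linarith [(even_two_mul k).pow_nonneg q]

theorem norm_mul_ofReal_pow_sq {u : ℂ} (hu : ‖u‖ = 1) (q : ℝ) (k : ℕ) :
    ‖u * (q : ℂ) ^ k‖ ^ 2 = q ^ (2 * k) := by
  rw [norm_mul, hu, one_mul, norm_pow, Complex.norm_real, Real.norm_eq_abs, ← pow_mul, mul_comm k,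
    (even_two_mul k).pow_abs]

theorem norm_mul_ofReal_pow_le_one {u : ℂ} (hu : ‖u‖ = 1) {q : ℝ} (hq : |q| ≤ 1) (k : ℕ) :
    ‖u * (q : ℂ) ^ k‖ ≤ 1 :=
  (sq_le_one_iff₀ (norm_nonneg _)).mp <| (norm_mul_ofReal_pow_sq hu q k).trans_le <|
    pow_two_mul_le_one hq k

/-- Woronowicz's representation of `C(SU_q(2))`: existence and uniqueness of the bounded
operators `α, γ`, the formulas for their adjoints, and the defining relations. (When `k = 0`
the coefficient `√(1-q⁰) = 0`, so the natural-subtraction index `e_{k-1}` is harmless.) -/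
theorem stmt11 (q : ℝ) (hq : q ∈ Set.Ioo (-1 : ℝ) 0) (u : ℂ) (hu : ‖u‖ = 1) :
    (∃! α : ell2 →L[ℂ] ell2, ∀ k : ℕ,
        α (eb k) = ((Real.sqrt (1 - q ^ (2 * k)) : ℝ) : ℂ) • eb (k - 1)) ∧
    (∃! γ : ell2 →L[ℂ] ell2, ∀ k : ℕ, γ (eb k) = (u * (q : ℂ) ^ k) • eb k) ∧
    (∀ α γ : ell2 →L[ℂ] ell2,
      (∀ k : ℕ, α (eb k) = ((Real.sqrt (1 - q ^ (2 * k)) : ℝ) : ℂ) • eb (k - 1)) →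
      (∀ k : ℕ, γ (eb k) = (u * (q : ℂ) ^ k) • eb k) →
      (∀ k : ℕ, adjoint α (eb k) = ((Real.sqrt (1 - q ^ (2 * k + 2)) : ℝ) : ℂ) • eb (k + 1)) ∧
      (∀ k : ℕ, adjoint γ (eb k) = (u⁻¹ * (q : ℂ) ^ k) • eb k) ∧
      α * γ = (q : ℂ) • (γ * α) ∧
      α * adjoint γ = (q : ℂ) • (adjoint γ * α) ∧
      γ * adjoint γ = adjoint γ * γ ∧
      adjoint α * α + adjoint γ * γ = 1 ∧
      α * adjoint α + ((q : ℂ) ^ 2) • (γ * adjoint γ) = 1) := by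
  have hq₁ : |q| ≤ 1 := abs_le.mpr ⟨hq.1.le, hq.2.le.trans zero_le_one⟩
  have hα₀ : ((√(1 - q ^ (2 * 0)) : ℝ) : ℂ) = 0 := by simp
  obtain ⟨b, hb⟩ := ell2.exists_hilbertBasis_coe_eq
  rw [← hb]
  refine ⟨b.existsUnique_of_exists_apply_eq ?_, b.existsUnique_of_exists_apply_eq ?_,
    fun α γ hα hγ => ?_⟩
  · rw [hb]
    exact lp.exists_backwardShift ENNReal.ofNat_ne_top zero_le_one
      (norm_ofReal_sqrt_one_sub_pow_le_one hq₁) hα₀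
  · rw [hb]
    exact lp.exists_diagonal ENNReal.ofNat_ne_top zero_le_one (norm_mul_ofReal_pow_le_one hu hq₁)
  have hγadj : ∀ k : ℕ, adjoint γ (b k) = (u⁻¹ * (q : ℂ) ^ k) • b k := fun k => by
    rw [b.adjoint_apply_of_diagonal hγ, map_mul, ← RCLike.inv_eq_conj hu, map_pow,
      Complex.conj_ofReal]
  refine ⟨fun k => ?_, hγadj, b.backwardShift_mul_diagonal_eq_smul hα hα₀ hγ fun k => by ring,
    b.backwardShift_mul_diagonal_eq_smul hα hα₀ hγadj fun k => by ring, b.commute_of_diagonal hγ hγadj,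
    b.adjoint_mul_self_add_adjoint_mul_self_eq_one hα hα₀ hγ fun k => ?_,
    b.mul_adjoint_add_smul_mul_adjoint_eq_one hα hα₀ hγ fun k => ?_⟩
  · rw [b.adjoint_apply_of_backwardShift hα hα₀, Complex.conj_ofReal, mul_add, mul_one]
  · rw [norm_ofReal_sqrt_one_sub_pow_sq hq₁, norm_mul_ofReal_pow_sq hu]
    ring
  · rw [norm_ofReal_sqrt_one_sub_pow_sq hq₁, norm_mul_ofReal_pow_sq hu,
      RCLike.ofReal_eq_complex_ofReal]
    push_cast
    ring
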